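/- arXiv:2212.00614 — 2 statements merged into one kernel-verified Lean document; each statement's English description precedes it below -/
import Mathlib

section
/- Suppose complex numbers u, v, x, y, z satisfy: u·v = -i/8, x·z = i/96, y·z = -i/288 (from closure), together with ℓ·u = (1/12)·m·v, m·x = 36·n·z, ℓ = 1/4, n = -1/36, and z = 1/2. Then u = 1, v = -i/8, x = i/48, y = -i/144, and m = 24i. -/
open Complex in
/-- Solving the 11D supergravity coefficient constraints.  The hypothesis
`hu` records the paper's normalization convention that the scaling coefficient `u` is a
positive real number (the system determines `u` only up to the sign `u = ±1` otherwise). -/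
theorem stmt3 (u v x y z ℓ m n : ℂ)
    (h1 : u * v = -I / 8) (h2 : x * z = I / 96) (h3 : y * z = -I / 288)
    (h4 : ℓ * u = (1 / 12) * m * v) (h5 : m * x = 36 * n * z)
    (h6 : ℓ = 1 / 4) (h7 : n = -1 / 36) (h8 : z = 1 / 2)
    (hu : u.im = 0 ∧ 0 < u.re) :
    u = 1 ∧ v = -I / 8 ∧ x = I / 48 ∧ y = -I / 144 ∧ m = 24 * I := by
  subst h6 h7 h8
  have hx : x = I / 48 := by linear_combination 2 * h2
  have hy : y = -I / 144 := by linear_combination 2 * h3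
  have hm : m = 24 * I := by
    linear_combination (-(48 : ℂ) * I) * h5 + (48 : ℂ) * I * m * hx + m * Complex.I_sq
  have hv : v = -I * u / 8 := by
    linear_combination (I / 2) * h4 + (I * v / 24) * hm + v * Complex.I_sq
  have hsq : u ^ 2 = 1 := by
    linear_combination 8 * I * h1 - 8 * I * u * hv + (u ^ 2 - 1) * Complex.I_sq
  have hcases : u = 1 ∨ u = -1 := by
    have : (u - 1) * (u + 1) = 0 := by linear_combination hsq
    rcases mul_eq_zero.mp this with h | h
    · left; linear_combination h
    · right; linear_combination h
  have hu1 : u = 1 := by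
    rcases hcases with h | h
    · exact h
    · exfalso; rw [h] at hu; norm_num at hu
  subst hu1
  refine ⟨rfl, ?_, hx, hy, hm⟩
  linear_combination h1
end

section
/- Let Ψ_{a_1...a_s} be a symmetric rank-s tensor-spinor (spin s+1/2 fermion) with gauge transformation δ_G Ψ_{a_1...a_s} = Σ_{i=1}^s ∂_{a_i} κ_{U_i}, where the gauge parameter satisfies the gamma-tracelessness condition γ^b κ_{b b_3...b_s} = 0. Then the field equation expression E_{a_1...a_s} = γ^b ∂_b Ψ_{a_1...a_s} − Σ_{i=1}^s γ^b ∂_{a_i} Ψ_{b U_i} is gauge-invariant: δ_G E = 0. -/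
/-- Remove the `i`-th entry from an `s`-tuple of indices, giving the `(s-1)`-tuple
`U_i = {a₁, …, a_{i-1}, a_{i+1}, …, a_s}`. -/
def removeIdx {s D : ℕ} (i : Fin s) (v : Fin s → Fin D) (j : Fin (s - 1)) : Fin D :=
  if _h : (j : ℕ) < (i : ℕ) then
    v ⟨(j : ℕ), by have hj := j.isLt; omega⟩
  else
    v ⟨(j : ℕ) + 1, by have hj := j.isLt; omega⟩

/-- Position, in the `(s-1)`-tuple obtained by removing entry `j`, of an original
index `i ≠ j`. -/
def mapIdx {s : ℕ} (j i : Fin s) (h : i ≠ j) : Fin (s - 1) :=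
  if _hlt : (i : ℕ) < (j : ℕ) then ⟨i, by have := j.isLt; omega⟩
  else ⟨(i : ℕ) - 1, by
    have hi := i.isLt; have hj := j.isLt
    have hne : (i : ℕ) ≠ (j : ℕ) := fun hh => h (Fin.ext hh)
    omega⟩

lemma removeIdx_update_self {s D : ℕ} (i : Fin s) (v : Fin s → Fin D) (b : Fin D) :
    removeIdx i (Function.update v i b) = removeIdx i v := by
  funext k
  unfold removeIdx
  split
  · rw [Function.update_of_ne (by simp only [ne_eq, Fin.ext_iff]; omega)]
  · rw [Function.update_of_ne (by simp only [ne_eq, Fin.ext_iff]; omega)]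

lemma removeIdx_update_ne {s D : ℕ} (i j : Fin s) (h : i ≠ j)
    (v : Fin s → Fin D) (b : Fin D) :
    removeIdx j (Function.update v i b) =
      Function.update (removeIdx j v) (mapIdx j i h) b := by
  have hne : (i : ℕ) ≠ (j : ℕ) := fun hh => h (Fin.ext hh)
  funext k
  simp only [removeIdx, mapIdx, Function.update_apply, Fin.ext_iff, Fin.val_mk]
  split_ifs <;> simp only [Fin.val_mk] at * <;> first | rfl | omega

/-- gauge invariance of the spin-(s+1/2) field equation.  Here `pd a` are
(commuting) partial derivatives, `gam a` are gamma matrices (commuting with the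
derivatives), `kap` is a symmetric, gamma-traceless rank-(s-1) gauge parameter, and
`dPsi v = Σ_i ∂_{v i} κ_{U_i}` is the gauge variation of the symmetric rank-`s` fermion.
Then the gauge variation of
`E_{a₁…a_s} = γ^b ∂_b Ψ_{a₁…a_s} − Σ_i γ^b ∂_{a_i} Ψ_{b U_i}` vanishes. -/
theorem stmt13 {D s : ℕ} {F : Type*} [AddCommGroup F] [Module ℂ F]
    (pd gam : Fin D → Module.End ℂ F)
    (hpd : ∀ a b, pd a * pd b = pd b * pd a)
    (hcomm : ∀ a b, gam a * pd b = pd b * gam a)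
    (kap : (Fin (s - 1) → Fin D) → F)
    (hsym : ∀ (w : Fin (s - 1) → Fin D) (σ : Equiv.Perm (Fin (s - 1))),
      kap (w ∘ σ) = kap w)
    (htr : ∀ (w : Fin (s - 1) → Fin D) (j : Fin (s - 1)),
      ∑ b, gam b (kap (Function.update w j b)) = 0)
    (dPsi : (Fin s → Fin D) → F)
    (hdPsi : ∀ v, dPsi v = ∑ i, pd (v i) (kap (removeIdx i v)))
    (v : Fin s → Fin D) :
    (∑ b, gam b (pd b (dPsi v)))
      - ∑ i, ∑ b, gam b (pd (v i) (dPsi (Function.update v i b))) = 0 := by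
  have hpd' : ∀ a b (x : F), pd a (pd b x) = pd b (pd a x) := by
    intro a b x
    have := DFunLike.congr_fun (hpd a b) x
    simpa using this
  have hcomm' : ∀ a b (x : F), gam a (pd b x) = pd b (gam a x) := by
    intro a b x
    have := DFunLike.congr_fun (hcomm a b) x
    simpa using this
  simp only [hdPsi, map_sum]
  rw [Finset.sum_comm, ← Finset.sum_sub_distrib]
  refine Finset.sum_eq_zero fun i _ => ?_
  have split : ∀ b : Fin D,
      (∑ j, gam b (pd (v i) (pd (Function.update v i b j)
          (kap (removeIdx j (Function.update v i b))))))
        = gam b (pd (v i) (pd (Function.update v i b i)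
            (kap (removeIdx i (Function.update v i b)))))
          + ∑ j ∈ Finset.univ.erase i, gam b (pd (v i) (pd (Function.update v i b j)
              (kap (removeIdx j (Function.update v i b))))) :=
    fun b => (Finset.add_sum_erase _ _ (Finset.mem_univ i)).symm
  simp only [split, Finset.sum_add_distrib, Function.update_self, removeIdx_update_self]
  have h1 : ∀ b : Fin D,
      gam b (pd (v i) (pd b (kap (removeIdx i v))))
        = gam b (pd b (pd (v i) (kap (removeIdx i v)))) := by
    intro b; rw [hpd']
  have h2 : (∑ b, ∑ j ∈ Finset.univ.erase i,
      gam b (pd (v i) (pd (Function.update v i b j)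
        (kap (removeIdx j (Function.update v i b)))))) = 0 := by
    rw [Finset.sum_comm]
    refine Finset.sum_eq_zero fun j hj => ?_
    have hji : i ≠ j := fun hh => (Finset.mem_erase.mp hj).1 hh.symm
    have key : ∀ b : Fin D,
        gam b (pd (v i) (pd (Function.update v i b j)
          (kap (removeIdx j (Function.update v i b)))))
        = pd (v i) (pd (v j)
            (gam b (kap (Function.update (removeIdx j v) (mapIdx j i hji) b)))) := by
      intro b
      rw [Function.update_of_ne (Ne.symm hji), removeIdx_update_ne i j hji,
        hcomm', hcomm']
    simp only [key, ← map_sum, htr, map_zero]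
  simp only [h1, h2, add_zero]
  abel
end
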